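/- arXiv:1001.1913 — 2 statements merged into one kernel-verified Lean document; each statement's English description precedes it below -/
import Mathlib

section
/- Let p be prime, m ≥ 1, and k ≥ 2 an integer. For any Dirichlet character χ modulo p^m, defining c_t = ∑_{n : tn ≡ 1 mod p^m} μ(n)/n^k for t coprime to p^m and c_t = 0 otherwise, one has ∑_{t mod p^m} χ(t) c_t = L(k, χ̄)^{-1} (1 - χ̄(p) p^{-k})^{-1}. -/
/-!
The condition `Coprime t (p^m)` is vacuous next to `χ t`, and once the finite sum over `t` is
moved inside the absolutely convergent sum over `n`, the only residue with `t n ≡ 1` is `t = n⁻¹`,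
so the inner sum is `χ (n⁻¹) = χ̄ n`. What remains is `∑ χ̄(n) μ(n) / n^k = L(k, χ̄)⁻¹`, and the
Euler factor is `1` because `χ̄ p = 0`.
-/

open ArithmeticFunction Finset

lemma ZMod.sum_range_natCast {M : Type*} [AddCommMonoid M] (N : ℕ) [NeZero N] (f : ZMod N → M) :
    ∑ t ∈ range N, f t = ∑ x : ZMod N, f x :=
  sum_nbij' (fun t => (t : ZMod N)) ZMod.val (fun _ _ => mem_univ _)
    (fun x _ => mem_range.mpr x.val_lt) (fun _ ht => ZMod.val_cast_of_lt (mem_range.mp ht))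
    (fun x _ => ZMod.natCast_zmod_val x) (fun _ _ => rfl)

lemma LSeries.term_natCast {f : ℕ → ℂ} (hf : f 0 = 0) (k : ℕ) :
    LSeries.term f k = fun n => f n / (n : ℂ) ^ k := by
  ext n
  rcases eq_or_ne n 0 with rfl | hn
  · simp [hf]
  · rw [LSeries.term_of_ne_zero hn, Complex.cpow_natCast]

namespace MulChar

variable {M R : Type*} [CommMonoidWithZero M] [CommSemiring R]

lemma sum_ite_mul_eq_one [Fintype M] [DecidableEq M] (χ : MulChar M R) (a : M) :
    ∑ x, (if x * a = 1 then χ x else 0) = χ⁻¹ a := by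
  by_cases ha : IsUnit a
  · obtain ⟨u, rfl⟩ := ha
    simp_rw [Units.mul_eq_one_iff_eq_inv, sum_ite_eq', mem_univ, if_true, inv_apply,
      Ring.inverse_unit]
  · have hx (x : M) : ¬ x * a = 1 := fun h => ha (IsUnit.of_mul_eq_one_right x h)
    simp [hx, map_nonunit _ ha]

end MulChar

namespace DirichletCharacter

variable {R : Type*} {N : ℕ}

lemma apply_eq_zero_of_prime_dvd [CommMonoidWithZero R] (χ : DirichletCharacter R N) {p : ℕ}
    (hp : p.Prime) (hpN : p ∣ N) : χ p = 0 :=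
  χ.map_nonunit fun h => hp.one_lt.ne' (((ZMod.isUnit_iff_coprime p N).mp h).eq_one_of_dvd hpN)

lemma mul_ite_coprime [CommMonoidWithZero R] (χ : DirichletCharacter R N) (t : ℕ) (x : R) :
    χ t * (if t.Coprime N then x else 0) = χ t * x := by
  split_ifs with h
  · rfl
  · rw [χ.map_nonunit (mt (ZMod.isUnit_iff_coprime t N).mp h), zero_mul, zero_mul]

lemma sum_range_ite_mul_mod_eq_one [CommSemiring R] [NeZero N] (χ : DirichletCharacter R N)
    (n : ℕ) : ∑ t ∈ range N, (if t * n % N = 1 % N then χ t else 0) = χ⁻¹ n := by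
  have hmod (t : ℕ) : t * n % N = 1 % N ↔ (t : ZMod N) * n = 1 := by
    rw [← ZMod.natCast_eq_natCast_iff']
    push_cast
    rfl
  simp_rw [hmod]
  rw [ZMod.sum_range_natCast N (fun x => if x * n = 1 then χ x else 0), χ.sum_ite_mul_eq_one]

lemma sum_range_mul_tsum_ite_mul_mod_eq_one [NeZero N] (χ : DirichletCharacter ℂ N)
    {a : ℕ → ℂ} (ha : Summable a) :
    ∑ t ∈ range N, χ t * ∑' n, (if t * n % N = 1 % N then a n else 0) =
      ∑' n : ℕ, χ⁻¹ n * a n := by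
  have hsummable (t : ℕ) : Summable fun n => if t * n % N = 1 % N then a n else 0 :=
    ha.norm.of_norm_bounded fun n => by split_ifs <;> simp
  calc ∑ t ∈ range N, χ t * ∑' n, (if t * n % N = 1 % N then a n else 0)
      = ∑' n, ∑ t ∈ range N, χ t * (if t * n % N = 1 % N then a n else 0) := by
        simp_rw [← tsum_mul_left]
        exact (Summable.tsum_finsetSum fun t _ => (hsummable t).mul_left _).symm
    _ = ∑' n : ℕ, χ⁻¹ n * a n := by
        simp_rw [mul_ite, mul_zero, ← ite_zero_mul, ← sum_mul, χ.sum_range_ite_mul_mod_eq_one]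

end DirichletCharacter

/-- For `p` prime, `m ≥ 1`, `k ≥ 2` and a Dirichlet character `χ` mod `p^m`,
with `c_t = ∑_{n : tn ≡ 1 mod p^m} μ(n)/n^k` for `t` coprime to `p^m` (and `0` otherwise),
`∑_{t mod p^m} χ(t) c_t = L(k, χ̄)⁻¹ (1 - χ̄(p) p^{-k})⁻¹`. -/
theorem char_sum_ct_eq_inv_LFunction (p m k : ℕ) (hp : p.Prime) (hm : 1 ≤ m)
    (hk : 2 ≤ k) [NeZero (p ^ m)] (χ : DirichletCharacter ℂ (p ^ m)) :
    ∑ t ∈ Finset.range (p ^ m), χ (t : ZMod (p ^ m)) *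
        (if Nat.Coprime t (p ^ m) then
          ∑' n : ℕ, (if t * n % p ^ m = 1 % p ^ m then (moebius n : ℂ) / (n : ℂ) ^ k else 0)
        else 0)
      = (DirichletCharacter.LFunction (χ.ringHomComp (starRingEnd ℂ)) k)⁻¹ *
        (1 - (χ.ringHomComp (starRingEnd ℂ)) (p : ZMod (p ^ m)) * ((p : ℂ) ^ k)⁻¹)⁻¹ := by
  have hconj : χ.ringHomComp (starRingEnd ℂ) = χ⁻¹ := χ.star_eq_inv
  have hs : 1 < (k : ℂ).re := by norm_cast
  have hmoebius :
      LSeries.term (fun n => (moebius n : ℂ)) k = fun n => (moebius n : ℂ) / (n : ℂ) ^ k :=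
    LSeries.term_natCast (by simp) k
  have hsummable : Summable fun n => (moebius n : ℂ) / (n : ℂ) ^ k :=
    hmoebius ▸ LSeriesSummable_moebius_iff.mpr hs
  simp_rw [χ.mul_ite_coprime, χ.sum_range_mul_tsum_ite_mul_mod_eq_one hsummable, hconj,
    χ⁻¹.apply_eq_zero_of_prime_dvd hp (dvd_pow_self p (by omega)), zero_mul, sub_zero, inv_one,
    mul_one, χ⁻¹.LFunction_eq_LSeries hs]
  rw [inv_eq_of_mul_eq_one_right (DirichletCharacter.LSeries.mul_mu_eq_one χ⁻¹ hs), LSeries,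
    LSeries.term_natCast (by simp) k]
  simp_rw [Pi.mul_apply, mul_div_assoc]
end

section
/- The assignment c_{k}(t + p^m ℤ_p) = ∑_{n : tn ≡ 1 mod p^m} μ(n)/n^k (for t coprime to p, k ≥ 2 fixed, and 0 if p divides t) defines a distribution on ℤ_p^*: for every t coprime to p, ∑_{t' mod p^{m+1}, t' ≡ t mod p^m} c_k(t' + p^{m+1}ℤ_p) = c_k(t + p^m ℤ_p). -/
/-!
Summing the `p^{m+1}`-level values over the lifts `t'` of `t` and exchanging the finite sum with
the absolutely convergent series, it suffices to fix `n` and count the lifts `t'` of `t` with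
`t' n ≡ 1 mod p^{m+1}`. If `t n ≢ 1 mod p^m` there is none. Otherwise `n` is a unit mod `p^m`,
hence mod `p^{m+1}` (as `m ≥ 1`), and the only candidate `t' ≡ n⁻¹ mod p^{m+1}` is indeed a
lift of `t ≡ n⁻¹ mod p^m`.
-/

open ArithmeticFunction Finset

lemma summable_ite_moebius_div_pow {k : ℕ} (hk : 2 ≤ k) (c : ℕ → Prop) [DecidablePred c] :
    Summable fun n : ℕ => if c n then (moebius n : ℂ) / (n : ℂ) ^ k else 0 := by
  refine Summable.of_norm_bounded (g := fun n : ℕ => 1 / (n : ℝ) ^ k)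
    (Real.summable_one_div_nat_pow.mpr (by omega)) fun n => ?_
  split_ifs
  · have hμ : ‖(moebius n : ℂ)‖ ≤ 1 := by
      rw [Complex.norm_intCast]
      exact_mod_cast abs_moebius_le_one
    rw [norm_div, norm_pow, Complex.norm_natCast]
    gcongr
  · rw [norm_zero]
    positivity

lemma mul_mod_eq_one_iff_eq_val_inv {M n t : ℕ} [NeZero M] (hn : n.Coprime M) (ht : t < M) :
    t * n % M = 1 % M ↔ t = ((n : ZMod M)⁻¹).val := by
  have hinv : (n : ZMod M) * (n : ZMod M)⁻¹ = 1 := ZMod.coe_mul_inv_eq_one n hn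
  calc t * n % M = 1 % M ↔ (t : ZMod M) * n = 1 := by
        rw [← ZMod.natCast_eq_natCast_iff', Nat.cast_mul, Nat.cast_one]
    _ ↔ (t : ZMod M) = (n : ZMod M)⁻¹ :=
        ⟨fun h => (ZMod.inv_eq_of_mul_eq_one M _ _ (by rwa [mul_comm])).symm,
          fun h => by rw [h, mul_comm, hinv]⟩
    _ ↔ t = ((n : ZMod M)⁻¹).val :=
        ⟨fun h => by rw [← h, ZMod.val_natCast_of_lt ht], fun h => by rw [h, ZMod.natCast_zmod_val]⟩

lemma sum_lifts_ite_mul_mod_eq_one {α : Type*} [AddCommMonoid α] {N M : ℕ} [NeZero M]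
    (hNM : N ∣ M) {n : ℕ} (hcop : n.Coprime N → n.Coprime M) (t : ℕ) (a : α) :
    ∑ t' ∈ (range M).filter (fun t' => t' % N = t % N), (if t' * n % M = 1 % M then a else 0)
      = if t * n % N = 1 % N then a else 0 := by
  by_cases htn : t * n % N = 1 % N
  · have hnM : n.Coprime M := hcop (Nat.coprime_of_mul_modEq_one t (by rwa [mul_comm] at htn))
    set u := ((n : ZMod M)⁻¹).val
    have hu : u < M := ZMod.val_lt _
    have hun : u * n % N = 1 % N :=
      Nat.ModEq.of_dvd hNM ((mul_mod_eq_one_iff_eq_val_inv hnM hu).mpr rfl)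
    have hu_lift : u % N = t % N :=
      Nat.ModEq.cancel_right_of_coprime (Nat.coprime_comm.mp (hnM.coprime_dvd_right hNM))
        (hun.trans htn.symm)
    have hsum : ∀ t' ∈ (range M).filter (fun t' => t' % N = t % N),
        (if t' * n % M = 1 % M then a else 0) = if t' = u then a else 0 := fun t' ht' =>
      if_congr (mul_mod_eq_one_iff_eq_val_inv hnM (mem_range.mp (mem_filter.mp ht').1)) rfl rfl
    rw [if_pos htn, sum_congr rfl hsum, sum_ite_eq',
      if_pos (mem_filter.mpr ⟨mem_range.mpr hu, hu_lift⟩)]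
  · refine (sum_eq_zero fun t' ht' => if_neg fun ht'n => htn ?_).trans (if_neg htn).symm
    exact (Nat.ModEq.mul_right n (mem_filter.mp ht').2).symm.trans (Nat.ModEq.of_dvd hNM ht'n)

theorem moebius_ct_distribution_property_general (p k : ℕ) (hp : p.Prime) (hk : 2 ≤ k)
    (m : ℕ) (hm : 1 ≤ m) (t : ℕ) :
    ∑ t' ∈ (Finset.range (p ^ (m + 1))).filter (fun t' => t' % p ^ m = t % p ^ m),
        (∑' n : ℕ,
          (if t' * n % p ^ (m + 1) = 1 % p ^ (m + 1) then (moebius n : ℂ) / (n : ℂ) ^ k else 0))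
      = ∑' n : ℕ, (if t * n % p ^ m = 1 % p ^ m then (moebius n : ℂ) / (n : ℂ) ^ k else 0) := by
  have : NeZero (p ^ (m + 1)) := ⟨pow_ne_zero _ hp.ne_zero⟩
  rw [← Summable.tsum_finsetSum fun _ _ => summable_ite_moebius_div_pow hk _]
  have hcop (n : ℕ) (hn : n.Coprime (p ^ m)) : n.Coprime (p ^ (m + 1)) :=
    (hn.coprime_dvd_right (dvd_pow_self p (by omega))).pow_right _
  exact tsum_congr fun n =>
    sum_lifts_ite_mul_mod_eq_one (pow_dvd_pow p m.le_succ) (hcop n) t _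

/-- The assignment `c_k(t + p^m ℤ_p) = ∑_{n : tn ≡ 1 mod p^m} μ(n)/n^k` defines a
distribution on `ℤ_p^*`: the values on the cosets mod `p^{m+1}` refining a coset
mod `p^m` sum up to the value on that coset. -/
theorem moebius_ct_distribution_property (p k : ℕ) (hp : p.Prime) (hk : 2 ≤ k)
    (m : ℕ) (hm : 1 ≤ m) (t : ℕ) (ht : Nat.Coprime t p) :
    ∑ t' ∈ (Finset.range (p ^ (m + 1))).filter (fun t' => t' % p ^ m = t % p ^ m),
        (∑' n : ℕ,
          (if t' * n % p ^ (m + 1) = 1 % p ^ (m + 1) then (moebius n : ℂ) / (n : ℂ) ^ k else 0))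
      = ∑' n : ℕ, (if t * n % p ^ m = 1 % p ^ m then (moebius n : ℂ) / (n : ℂ) ^ k else 0) :=
  moebius_ct_distribution_property_general p k hp hk m hm t
end
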